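/- arXiv:2601.10792 — 3 statements merged into one kernel-verified Lean document; each statement's English description precedes it below -/
import Mathlib

section
/- Let X_A, X_B, X_C and F_A, F_B, F_C be finitely-valued random variables on a finite probability space. Assume that F_A, F_B, F_C are mutually independent, that the pair (X_A, X_B) is conditionally independent of F_C given (F_A, F_B), that the pair (X_B, X_C) is conditionally independent of F_A given (F_B, F_C), and that X_B is conditionally independent of (F_A, F_C) given F_B. Then the conditional mutual information satisfies I((X_A, F_A) : (X_C, F_C) | (X_B, F_B)) = I(X_A : X_C | (X_B, F_A, F_B, F_C)); that is, the CMI of the flagged ensemble equals the average over flag configurations f of the CMI of X_A and X_C given X_B computed in the conditional distribution given (F_A, F_B, F_C) = f. -/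
noncomputable section

/-- Probability of an event under a pmf `p` on a finite sample space. -/
def pr {Ω : Type*} [Fintype Ω] (p : Ω → ℝ) (E : Set Ω) : ℝ :=
  ∑ ω, E.indicator p ω

/-- Distribution (pmf) of the random variable `X` under `p`. -/
def distOf {Ω S : Type*} [Fintype Ω] (p : Ω → ℝ) (X : Ω → S) (s : S) : ℝ :=
  pr p {ω | X ω = s}

/-- Shannon entropy (natural logarithm) of the random variable `X` under `p`. -/
def entH {Ω S : Type*} [Fintype Ω] [Fintype S] (p : Ω → ℝ) (X : Ω → S) : ℝ :=
  ∑ s, Real.negMulLog (distOf p X s)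

/-- Conditional mutual information `I(X : Y | Z)`. -/
def cmi {Ω S T U : Type*} [Fintype Ω] [Fintype S] [Fintype T] [Fintype U]
    (p : Ω → ℝ) (X : Ω → S) (Y : Ω → T) (Z : Ω → U) : ℝ :=
  entH p (fun ω => (X ω, Z ω)) + entH p (fun ω => (Y ω, Z ω)) - entH p Z
    - entH p (fun ω => (X ω, Y ω, Z ω))

/-- Mutual independence of a triple of random variables (for probability distributions,
pointwise factorization of the joint pmf of all three variables into the product of the
marginals is equivalent to mutual independence). -/
def IndepTriple {Ω S T U : Type*} [Fintype Ω]
    (p : Ω → ℝ) (X : Ω → S) (Y : Ω → T) (Z : Ω → U) : Prop :=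
  ∀ (x : S) (y : T) (z : U),
    pr p {ω | X ω = x ∧ Y ω = y ∧ Z ω = z} =
      pr p {ω | X ω = x} * pr p {ω | Y ω = y} * pr p {ω | Z ω = z}

/-- `X` and `Y` are conditionally independent given `Z`. -/
def CondIndepGiven {Ω S T U : Type*} [Fintype Ω]
    (p : Ω → ℝ) (X : Ω → S) (Y : Ω → T) (Z : Ω → U) : Prop :=
  ∀ (x : S) (y : T) (z : U),
    pr p {ω | X ω = x ∧ Y ω = y ∧ Z ω = z} * pr p {ω | Z ω = z} =
      pr p {ω | X ω = x ∧ Z ω = z} * pr p {ω | Y ω = y ∧ Z ω = z}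

/-! Writing `H(X) = -∑ ω, p ω * log P(X = X ω)`, the conditional independence `X ⊥ Y | Z` becomes
the identity `P(X,Y,Z) P(Z) = P(X,Z) P(Y,Z)` between the probabilities of the atoms containing
any `ω` of positive mass, so `I(X : Y | Z) = 0`. Expanding both sides of the theorem into
entropies, the three conditional independences `h1`–`h3` make their difference equal to
`I(F_A : F_C | F_B)`, which vanishes because the flags are independent. -/

section Entropy

variable {Ω S T U : Type*} [Fintype Ω] {p : Ω → ℝ}

def atomPr (p : Ω → ℝ) (X : Ω → S) (ω : Ω) : ℝ :=
  distOf p X (X ω)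

theorem distOf_eq_sum_filter [DecidableEq S] (p : Ω → ℝ) (X : Ω → S) (s : S) :
    distOf p X s = ∑ ω with X ω = s, p ω := by
  simp only [distOf, pr, Finset.sum_filter, Set.indicator_apply, Set.mem_ofPred_eq]

theorem entH_eq_neg_sum_mul_log_atomPr [Fintype S] (p : Ω → ℝ) (X : Ω → S) :
    entH p X = -∑ ω, p ω * Real.log (atomPr p X ω) := by
  classical
  rw [← Finset.sum_fiberwise Finset.univ X, entH, ← Finset.sum_neg_distrib]
  refine Finset.sum_congr rfl fun s _ => ?_
  rw [Real.negMulLog, distOf_eq_sum_filter, neg_mul, Finset.sum_mul]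
  congr 1
  refine Finset.sum_congr rfl fun ω hω => ?_
  rw [atomPr, (Finset.mem_filter.mp hω).2, distOf_eq_sum_filter]

theorem atomPr_congr {X : Ω → S} {Y : Ω → T} (h : ∀ ω ω', X ω' = X ω ↔ Y ω' = Y ω) :
    atomPr p X = atomPr p Y :=
  funext fun ω => congrArg (pr p) (Set.ext fun ω' => h ω ω')

theorem entH_congr [Fintype S] [Fintype T] {X : Ω → S} {Y : Ω → T}
    (h : ∀ ω ω', X ω' = X ω ↔ Y ω' = Y ω) : entH p X = entH p Y := by
  rw [entH_eq_neg_sum_mul_log_atomPr, entH_eq_neg_sum_mul_log_atomPr, atomPr_congr h]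

theorem le_pr_of_mem (hp0 : ∀ ω, 0 ≤ p ω) {E : Set Ω} {ω : Ω} (hω : ω ∈ E) : p ω ≤ pr p E := by
  rw [pr, ← Set.indicator_of_mem hω p]
  exact Finset.single_le_sum (fun ω _ => Set.indicator_nonneg (fun ω _ => hp0 ω) ω)
    (Finset.mem_univ ω)

theorem atomPr_pos (hp0 : ∀ ω, 0 ≤ p ω) (X : Ω → S) {ω : Ω} (hω : 0 < p ω) :
    0 < atomPr p X ω :=
  hω.trans_le (le_pr_of_mem hp0 rfl)

theorem CondIndepGiven.atomPr_mul {X : Ω → S} {Y : Ω → T} {Z : Ω → U}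
    (h : CondIndepGiven p X Y Z) (ω : Ω) :
    atomPr p (fun ω => (X ω, Y ω, Z ω)) ω * atomPr p Z ω =
      atomPr p (fun ω => (X ω, Z ω)) ω * atomPr p (fun ω => (Y ω, Z ω)) ω := by
  simpa only [atomPr, distOf, Prod.mk.injEq] using h (X ω) (Y ω) (Z ω)

theorem cmi_eq_zero_of_condIndepGiven [Fintype S] [Fintype T] [Fintype U]
    (hp0 : ∀ ω, 0 ≤ p ω) {X : Ω → S} {Y : Ω → T} {Z : Ω → U} (h : CondIndepGiven p X Y Z) :
    cmi p X Y Z = 0 := by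
  have key : ∀ ω, p ω * Real.log (atomPr p (fun ω => (X ω, Y ω, Z ω)) ω) +
      p ω * Real.log (atomPr p Z ω) = p ω * Real.log (atomPr p (fun ω => (X ω, Z ω)) ω) +
      p ω * Real.log (atomPr p (fun ω => (Y ω, Z ω)) ω) := by
    intro ω
    rcases (hp0 ω).eq_or_lt with h0 | h0
    · simp [← h0]
    rw [← mul_add, ← mul_add, ← Real.log_mul (atomPr_pos hp0 _ h0).ne' (atomPr_pos hp0 _ h0).ne',
      ← Real.log_mul (atomPr_pos hp0 _ h0).ne' (atomPr_pos hp0 _ h0).ne', h.atomPr_mul]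
  have hsum := Finset.sum_congr rfl fun ω (_ : ω ∈ Finset.univ) => key ω
  rw [Finset.sum_add_distrib, Finset.sum_add_distrib] at hsum
  simp only [cmi, entH_eq_neg_sum_mul_log_atomPr]
  linarith

end Entropy

section Independence

variable {Ω S T U : Type*} [Fintype Ω] {p : Ω → ℝ}

theorem pr_eq_sum_pr_inter [Fintype T] (p : Ω → ℝ) (E : Set Ω) (V : Ω → T) :
    pr p E = ∑ v, pr p (E ∩ {ω | V ω = v}) := by
  classical
  simp only [pr, Set.indicator_apply, Set.mem_inter_iff, Set.mem_ofPred_eq]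
  rw [Finset.sum_comm]
  exact Finset.sum_congr rfl fun ω _ => by by_cases hω : ω ∈ E <;> simp [hω]

theorem sum_pr_eq_one [Fintype T] (hp1 : ∑ ω, p ω = 1) (V : Ω → T) :
    ∑ v, pr p {ω | V ω = v} = 1 := by
  have h := pr_eq_sum_pr_inter p Set.univ V
  simp only [Set.univ_inter] at h
  rw [← h]
  simpa [pr] using hp1

theorem IndepTriple.pr_and [Fintype U] (hp1 : ∑ ω, p ω = 1) {X : Ω → S} {Y : Ω → T}
    {Z : Ω → U} (h : IndepTriple p X Y Z) (x : S) (y : T) :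
    pr p {ω | X ω = x ∧ Y ω = y} = pr p {ω | X ω = x} * pr p {ω | Y ω = y} := by
  rw [pr_eq_sum_pr_inter p _ Z]
  calc ∑ z, pr p ({ω | X ω = x ∧ Y ω = y} ∩ {ω | Z ω = z})
      = ∑ z, pr p {ω | X ω = x} * pr p {ω | Y ω = y} * pr p {ω | Z ω = z} :=
        Finset.sum_congr rfl fun z _ =>
          (congrArg (pr p) (Set.ext fun _ => and_assoc)).trans (h x y z)
    _ = pr p {ω | X ω = x} * pr p {ω | Y ω = y} := by
        rw [← Finset.mul_sum, sum_pr_eq_one hp1, mul_one]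

theorem IndepTriple.rotate {X : Ω → S} {Y : Ω → T} {Z : Ω → U} (h : IndepTriple p X Y Z) :
    IndepTriple p Y Z X := fun y z x => by
  rw [show {ω | Y ω = y ∧ Z ω = z ∧ X ω = x} = {ω | X ω = x ∧ Y ω = y ∧ Z ω = z} from
    Set.ext fun _ => and_rotate.symm, h x y z]
  ring

theorem IndepTriple.condIndepGiven [Fintype S] [Fintype U] (hp1 : ∑ ω, p ω = 1) {X : Ω → S}
    {Y : Ω → T} {Z : Ω → U} (h : IndepTriple p X Y Z) : CondIndepGiven p X Z Y := fun x z y => by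
  rw [show {ω | X ω = x ∧ Z ω = z ∧ Y ω = y} = {ω | X ω = x ∧ Y ω = y ∧ Z ω = z} from
      Set.ext fun _ => and_congr_right' and_comm,
    show {ω | Z ω = z ∧ Y ω = y} = {ω | Y ω = y ∧ Z ω = z} from Set.ext fun _ => and_comm,
    h x y z, h.pr_and hp1, h.rotate.pr_and hp1]
  ring

end Independence

theorem cmi_flagged_eq_add_cmi_flags {Ω SA SB SC FA FB FC : Type*} [Fintype Ω]
    [Fintype SA] [Fintype SB] [Fintype SC] [Fintype FA] [Fintype FB] [Fintype FC]
    {p : Ω → ℝ} (hp0 : ∀ ω, 0 ≤ p ω) {XA : Ω → SA} {XB : Ω → SB} {XC : Ω → SC}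
    {fA : Ω → FA} {fB : Ω → FB} {fC : Ω → FC}
    (h1 : CondIndepGiven p (fun ω => (XA ω, XB ω)) fC (fun ω => (fA ω, fB ω)))
    (h2 : CondIndepGiven p (fun ω => (XB ω, XC ω)) fA (fun ω => (fB ω, fC ω)))
    (h3 : CondIndepGiven p XB (fun ω => (fA ω, fC ω)) fB) :
    cmi p (fun ω => (XA ω, fA ω)) (fun ω => (XC ω, fC ω)) (fun ω => (XB ω, fB ω)) =
      cmi p XA XC (fun ω => (XB ω, fA ω, fB ω, fC ω)) + cmi p fA fC fB := by
  have E1 := cmi_eq_zero_of_condIndepGiven hp0 h1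
  have E2 := cmi_eq_zero_of_condIndepGiven hp0 h2
  have E3 := cmi_eq_zero_of_condIndepGiven hp0 h3
  unfold cmi at E1 E2 E3 ⊢
  have S1 : entH p (fun ω => ((XA ω, XB ω), fA ω, fB ω)) =
      entH p (fun ω => ((XA ω, fA ω), XB ω, fB ω)) :=
    entH_congr fun _ _ => by simp only [Prod.mk.injEq]; tauto
  have S2 : entH p (fun ω => ((XA ω, XB ω), fC ω, fA ω, fB ω)) =
      entH p (fun ω => (XA ω, XB ω, fA ω, fB ω, fC ω)) :=
    entH_congr fun _ _ => by simp only [Prod.mk.injEq]; tauto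
  have S3 : entH p (fun ω => ((XB ω, XC ω), fB ω, fC ω)) =
      entH p (fun ω => ((XC ω, fC ω), XB ω, fB ω)) :=
    entH_congr fun _ _ => by simp only [Prod.mk.injEq]; tauto
  have S4 : entH p (fun ω => ((XB ω, XC ω), fA ω, fB ω, fC ω)) =
      entH p (fun ω => (XC ω, XB ω, fA ω, fB ω, fC ω)) :=
    entH_congr fun _ _ => by simp only [Prod.mk.injEq]; tauto
  have S5 : entH p (fun ω => (XB ω, (fA ω, fC ω), fB ω)) =
      entH p (fun ω => (XB ω, fA ω, fB ω, fC ω)) :=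
    entH_congr fun _ _ => by simp only [Prod.mk.injEq]; tauto
  have S6 : entH p (fun ω => ((XA ω, fA ω), (XC ω, fC ω), XB ω, fB ω)) =
      entH p (fun ω => (XA ω, XC ω, XB ω, fA ω, fB ω, fC ω)) :=
    entH_congr fun _ _ => by simp only [Prod.mk.injEq]; tauto
  have S7 : entH p (fun ω => (fB ω, fC ω)) = entH p (fun ω => (fC ω, fB ω)) :=
    entH_congr fun _ _ => by simp only [Prod.mk.injEq]; tauto
  have S8 : entH p (fun ω => (fC ω, fA ω, fB ω)) = entH p (fun ω => (fA ω, fC ω, fB ω)) :=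
    entH_congr fun _ _ => by simp only [Prod.mk.injEq]; tauto
  have S9 : entH p (fun ω => (fA ω, fB ω, fC ω)) = entH p (fun ω => (fA ω, fC ω, fB ω)) :=
    entH_congr fun _ _ => by simp only [Prod.mk.injEq]; tauto
  have S10 : entH p (fun ω => ((fA ω, fC ω), fB ω)) = entH p (fun ω => (fA ω, fC ω, fB ω)) :=
    entH_congr fun _ _ => by simp only [Prod.mk.injEq]; tauto
  linarith

/-- The flag-decomposition identity for the CMI of the flagged (heralded) ensemble:
the CMI of the flagged ensemble equals the flag-average of the conditional CMI, i.e.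
`I((X_A,F_A) : (X_C,F_C) | (X_B,F_B)) = I(X_A : X_C | (X_B, F_A, F_B, F_C))`. -/
theorem flagged_cmi_decomposition
    {Ω SA SB SC FA FB FC : Type*} [Fintype Ω]
    [Fintype SA] [Fintype SB] [Fintype SC] [Fintype FA] [Fintype FB] [Fintype FC]
    (p : Ω → ℝ) (hp0 : ∀ ω, 0 ≤ p ω) (hp1 : ∑ ω, p ω = 1)
    (XA : Ω → SA) (XB : Ω → SB) (XC : Ω → SC)
    (fA : Ω → FA) (fB : Ω → FB) (fC : Ω → FC)
    (hF : IndepTriple p fA fB fC)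
    (h1 : CondIndepGiven p (fun ω => (XA ω, XB ω)) fC (fun ω => (fA ω, fB ω)))
    (h2 : CondIndepGiven p (fun ω => (XB ω, XC ω)) fA (fun ω => (fB ω, fC ω)))
    (h3 : CondIndepGiven p XB (fun ω => (fA ω, fC ω)) fB) :
    cmi p (fun ω => (XA ω, fA ω)) (fun ω => (XC ω, fC ω)) (fun ω => (XB ω, fB ω)) =
      cmi p XA XC (fun ω => (XB ω, fA ω, fB ω, fC ω)) := by
  rw [cmi_flagged_eq_add_cmi_flags hp0 h1 h2 h3,
    cmi_eq_zero_of_condIndepGiven hp0 (hF.condIndepGiven hp1), add_zero]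

end
end

section
/- Let A and C be finite index sets, let U be an F2-linear subspace of (ZMod 2)^A × (ZMod 2)^C (the space of parity constraints), and let X = (X_A, X_C) be a random variable uniformly distributed on the orthogonal complement U^⊥ of U with respect to the standard coordinatewise bilinear form. Then the mutual information between X_A and X_C equals (dim π_A(U) + dim π_C(U) - dim U) · log 2, where π_A and π_C denote the coordinate projections onto (ZMod 2)^A and (ZMod 2)^C respectively, dim denotes F2-dimension, and mutual information is computed with natural logarithms. -/
noncomputable section

/-- Mutual information `I(X : Y)`. -/
def mi {Ω S T : Type*} [Fintype Ω] [Fintype S] [Fintype T]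
    (p : Ω → ℝ) (X : Ω → S) (Y : Ω → T) : ℝ :=
  entH p X + entH p Y - entH p (fun ω => (X ω, Y ω))

variable {A C : Type*} [Fintype A] [DecidableEq A] [Fintype C] [DecidableEq C]

/-- The standard coordinatewise bilinear pairing on `(ZMod 2)^A × (ZMod 2)^C`. -/
def pairForm (x y : (A → ZMod 2) × (C → ZMod 2)) : ZMod 2 :=
  (∑ i, x.1 i * y.1 i) + ∑ j, x.2 j * y.2 j

/-- The orthogonal complement of `U` with respect to the standard bilinear form. -/
def perpSet (U : Submodule (ZMod 2) ((A → ZMod 2) × (C → ZMod 2))) :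
    Set ((A → ZMod 2) × (C → ZMod 2)) :=
  {x | ∀ u ∈ U, pairForm x u = 0}


/-! Pushing the uniform distribution on a finite group `W` forward along a homomorphism gives the
uniform distribution on the image, because every nonempty fibre is a coset of the kernel. For
`W = U^⊥` this gives `H(X_A) = dim π_A(W) · log 2`, `H(X_C) = dim π_C(W) · log 2` and
`H(X) = dim W · log 2`. The vectors of `W` with vanishing `A`-part are exactly `0 × π_C(U)^⊥`,
so rank–nullity gives `dim π_A(W) = dim W - |C| + dim π_C(U)`, and symmetrically for `C`;
together with `dim W = |A| + |C| - dim U` this turns `I(X_A : X_C)` into the rank formula. -/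

open Module

section Entropy

variable {Ω S : Type*} [Fintype Ω]

lemma Fintype.sum_indicator_const (T : Set Ω) (c : ℝ) :
    ∑ ω, T.indicator (fun _ => c) ω = Nat.card T * c := by
  classical
  simp [Set.indicator_apply, Finset.sum_ite, Nat.card_eq_fintype_card, Fintype.card_subtype]

lemma Real.mul_negMulLog_inv (x : ℝ) : x * Real.negMulLog x⁻¹ = Real.log x := by
  rcases eq_or_ne x 0 with rfl | hx
  · simp
  · rw [Real.negMulLog, Real.log_inv]
    field_simp

lemma distOf_eq_card_div_of_uniform (T : Set Ω) {p : Ω → ℝ}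
    (hp : ∀ ω, p ω = T.indicator (fun _ => ((Nat.card T : ℝ))⁻¹) ω) (X : Ω → S) (s : S) :
    distOf p X s = Nat.card {t : T // X t = s} / Nat.card T := by
  have hfiber : Nat.card {t : T // X t = s} = Nat.card ↥({ω | X ω = s} ∩ T) := by
    rw [Set.inter_comm]
    exact Nat.card_congr (Equiv.subtypeSubtypeEquivSubtypeInter (· ∈ T) (X · = s))
  rw [distOf, pr, funext hp, hfiber, Set.indicator_indicator, Fintype.sum_indicator_const,
    div_eq_mul_inv]

lemma entH_eq_log_card_of_uniform_distOf [Fintype S] (T : Set S) {p : Ω → ℝ} {X : Ω → S}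
    (hX : ∀ s, distOf p X s = T.indicator (fun _ => ((Nat.card T : ℝ))⁻¹) s) :
    entH p X = Real.log (Nat.card T) := by
  have hneg : ∀ s, Real.negMulLog (T.indicator (fun _ => ((Nat.card T : ℝ))⁻¹) s)
      = T.indicator (fun _ => Real.negMulLog (Nat.card T : ℝ)⁻¹) s := fun s => by
    by_cases hs : s ∈ T <;> simp [hs]
  simp only [entH, hX, hneg, Fintype.sum_indicator_const, Real.mul_negMulLog_inv]

end Entropy

section UniformOnSubgroup

variable {G G' : Type*} [AddGroup G] [Fintype G] [AddGroup G']

lemma distOf_addMonoidHom_of_uniform (H : AddSubgroup G) {p : G → ℝ}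
    (hp : ∀ x, p x = (H : Set G).indicator (fun _ => ((Nat.card (H : Set G) : ℝ))⁻¹) x)
    (φ : G →+ G') (s : G') :
    distOf p φ s =
      (H.map φ : Set G').indicator (fun _ => ((Nat.card (H.map φ : Set G') : ℝ))⁻¹) s := by
  rw [distOf_eq_card_div_of_uniform _ hp]
  set ψ := φ.comp H.subtype
  have hcard : Nat.card H = Nat.card ψ.ker * Nat.card (H.map φ) := by
    rw [← ψ.ker.card_mul_index, AddSubgroup.index_ker ψ, AddMonoidHom.range_comp,
      AddSubgroup.range_subtype]
  by_cases hs : s ∈ H.map φ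
  · obtain ⟨h, hh, rfl⟩ := hs
    have hfiber : Nat.card {t : (H : Set G) // φ t = φ h} = Nat.card ψ.ker :=
      Nat.card_congr (ψ.fiberEquivKer ⟨h, hh⟩)
    have hker : (Nat.card ψ.ker : ℝ) ≠ 0 := Nat.cast_ne_zero.mpr Nat.card_pos.ne'
    rw [Set.indicator_of_mem (AddSubgroup.mem_map_of_mem φ hh), hfiber]
    change _ / (Nat.card H : ℝ) = _
    rw [hcard]
    push_cast
    field_simp
  · have : IsEmpty {t : (H : Set G) // φ t = s} := ⟨fun ⟨t, ht⟩ => hs ⟨t, t.2, ht⟩⟩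
    rw [Set.indicator_of_notMem hs, Nat.card_of_isEmpty, Nat.cast_zero, zero_div]

lemma entH_addMonoidHom_eq_log_card_map [Fintype G'] (H : AddSubgroup G) {p : G → ℝ}
    (hp : ∀ x, p x = (H : Set G).indicator (fun _ => ((Nat.card (H : Set G) : ℝ))⁻¹) x)
    (φ : G →+ G') :
    entH p φ = Real.log (Nat.card (H.map φ)) :=
  entH_eq_log_card_of_uniform_distOf _ (distOf_addMonoidHom_of_uniform H hp φ)

lemma entH_linearMap_eq_finrank_map_mul_log {K V V' : Type*} [Field K]
    [AddCommGroup V] [Module K V] [Fintype V] [AddCommGroup V'] [Module K V'] [Fintype V']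
    (W : Submodule K V) {p : V → ℝ}
    (hp : ∀ x, p x = (W : Set V).indicator (fun _ => ((Nat.card (W : Set V) : ℝ))⁻¹) x)
    (φ : V →ₗ[K] V') :
    entH p φ = finrank K (W.map φ) * Real.log (Nat.card K) := by
  have h := entH_addMonoidHom_eq_log_card_map W.toAddSubgroup hp (φ : V →+ V')
  rw [← Submodule.map_toAddSubgroup] at h
  rw [← Real.log_pow, ← Nat.cast_pow, ← Module.natCard_eq_pow_finrank]
  exact h

end UniformOnSubgroup

section DualPerp

variable {K V : Type*} [Field K] [AddCommGroup V] [Module K V]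

def dualPerp (e : V ≃ₗ[K] Module.Dual K V) (U : Submodule K V) : Submodule K V :=
  U.dualAnnihilator.comap (e : V →ₗ[K] Module.Dual K V)

lemma mem_dualPerp {e : V ≃ₗ[K] Module.Dual K V} {U : Submodule K V} {x : V} :
    x ∈ dualPerp e U ↔ ∀ u ∈ U, e x u = 0 := by
  simp [dualPerp]

lemma finrank_dualPerp_add_finrank [FiniteDimensional K V] (e : V ≃ₗ[K] Module.Dual K V)
    (U : Submodule K V) :
    finrank K (dualPerp e U) + finrank K U = finrank K V := by
  rw [dualPerp, Submodule.comap_equiv_eq_map_symm, LinearEquiv.finrank_map_eq, add_comm,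
    Subspace.finrank_add_finrank_dualAnnihilator_eq]

lemma Submodule.finrank_map_add_finrank_inf_ker {V' : Type*} [AddCommGroup V'] [Module K V']
    [FiniteDimensional K V] (W : Submodule K V) (f : V →ₗ[K] V') :
    finrank K (W.map f) + finrank K ↥(W ⊓ LinearMap.ker f) = finrank K W := by
  rw [← LinearMap.finrank_range_add_finrank_ker (f.domRestrict W), LinearMap.range_domRestrict,
    LinearMap.ker_domRestrict, ← Submodule.finrank_map_subtype_eq, Submodule.map_comap_subtype]

end DualPerp

section ProdDotProduct

variable (K : Type*) [Field K]

def prodDotProductEquiv : ((A → K) × (C → K)) ≃ₗ[K] Module.Dual K ((A → K) × (C → K)) :=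
  ((dotProductEquiv K A).prodCongr (dotProductEquiv K C)).trans
    (Module.dualProdDualEquivDual K _ _)

variable {K}

@[simp]
lemma prodDotProductEquiv_apply_apply (x y : (A → K) × (C → K)) :
    prodDotProductEquiv K x y = x.1 ⬝ᵥ y.1 + x.2 ⬝ᵥ y.2 :=
  rfl

lemma dualPerp_inf_ker_fst (U : Submodule K ((A → K) × (C → K))) :
    dualPerp (prodDotProductEquiv K) U ⊓ LinearMap.ker (LinearMap.fst K _ _) =
      (dualPerp (dotProductEquiv K C) (U.map (LinearMap.snd K _ _))).map
        (LinearMap.inr K _ _) := by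
  ext ⟨a, c⟩
  simp only [Submodule.mem_inf, Submodule.mem_map, mem_dualPerp, LinearMap.mem_ker,
    LinearMap.fst_apply, LinearMap.snd_apply, LinearMap.inr_apply, Prod.mk.injEq,
    prodDotProductEquiv_apply_apply, dotProductEquiv_apply_apply, Prod.forall,
    forall_exists_index, and_imp]
  constructor
  · rintro ⟨h, rfl⟩
    refine ⟨c, fun u x b hxb hbu => ?_, rfl, rfl⟩
    subst hbu
    simpa using h x b hxb
  · rintro ⟨c, h, rfl, rfl⟩
    exact ⟨fun x b hxb => by simpa using h b x b hxb rfl, rfl⟩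

lemma dualPerp_inf_ker_snd (U : Submodule K ((A → K) × (C → K))) :
    dualPerp (prodDotProductEquiv K) U ⊓ LinearMap.ker (LinearMap.snd K _ _) =
      (dualPerp (dotProductEquiv K A) (U.map (LinearMap.fst K _ _))).map
        (LinearMap.inl K _ _) := by
  ext ⟨a, c⟩
  simp only [Submodule.mem_inf, Submodule.mem_map, mem_dualPerp, LinearMap.mem_ker,
    LinearMap.fst_apply, LinearMap.snd_apply, LinearMap.inl_apply, Prod.mk.injEq,
    prodDotProductEquiv_apply_apply, dotProductEquiv_apply_apply, Prod.forall,
    forall_exists_index, and_imp]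
  constructor
  · rintro ⟨h, rfl⟩
    refine ⟨a, fun u x b hxb hxu => ?_, rfl, rfl⟩
    subst hxu
    simpa using h x b hxb
  · rintro ⟨a, h, rfl, rfl⟩
    exact ⟨fun x b hxb => by simpa using h x x b hxb rfl, rfl⟩

lemma finrank_map_fst_dualPerp_add (U : Submodule K ((A → K) × (C → K))) :
    finrank K ((dualPerp (prodDotProductEquiv K) U).map (LinearMap.fst K _ _))
        + finrank K (C → K)
      = finrank K (dualPerp (prodDotProductEquiv K) U)
        + finrank K (U.map (LinearMap.snd K _ _)) := by
  have hker := (dualPerp (prodDotProductEquiv K) U).finrank_map_add_finrank_inf_ker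
    (LinearMap.fst K (A → K) (C → K))
  have hperp := finrank_dualPerp_add_finrank (dotProductEquiv K C) (U.map (LinearMap.snd K _ _))
  rw [dualPerp_inf_ker_fst,
    ← (Submodule.equivMapOfInjective _ LinearMap.inr_injective _).finrank_eq] at hker
  omega

lemma finrank_map_snd_dualPerp_add (U : Submodule K ((A → K) × (C → K))) :
    finrank K ((dualPerp (prodDotProductEquiv K) U).map (LinearMap.snd K _ _))
        + finrank K (A → K)
      = finrank K (dualPerp (prodDotProductEquiv K) U)
        + finrank K (U.map (LinearMap.fst K _ _)) := by
  have hker := (dualPerp (prodDotProductEquiv K) U).finrank_map_add_finrank_inf_ker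
    (LinearMap.snd K (A → K) (C → K))
  have hperp := finrank_dualPerp_add_finrank (dotProductEquiv K A) (U.map (LinearMap.fst K _ _))
  rw [dualPerp_inf_ker_snd,
    ← (Submodule.equivMapOfInjective _ LinearMap.inl_injective _).finrank_eq] at hker
  omega

lemma finrank_map_fst_add_finrank_map_snd_dualPerp (U : Submodule K ((A → K) × (C → K))) :
    finrank K ((dualPerp (prodDotProductEquiv K) U).map (LinearMap.fst K _ _))
        + finrank K ((dualPerp (prodDotProductEquiv K) U).map (LinearMap.snd K _ _))
        + finrank K U
      = finrank K (U.map (LinearMap.fst K _ _)) + finrank K (U.map (LinearMap.snd K _ _))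
        + finrank K (dualPerp (prodDotProductEquiv K) U) := by
  have hA := finrank_map_fst_dualPerp_add U
  have hC := finrank_map_snd_dualPerp_add U
  have hW := finrank_dualPerp_add_finrank (prodDotProductEquiv K) U
  rw [Module.finrank_prod] at hW
  omega

end ProdDotProduct

lemma coe_dualPerp_prodDotProductEquiv (U : Submodule (ZMod 2) ((A → ZMod 2) × (C → ZMod 2))) :
    (dualPerp (prodDotProductEquiv (ZMod 2)) U : Set ((A → ZMod 2) × (C → ZMod 2))) =
      perpSet U := by
  ext x
  simp [mem_dualPerp, perpSet, pairForm, dotProduct]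

/-- The rank formula for the mutual information between the `A`-part and the `C`-part of a
random variable uniformly distributed on the orthogonal complement of the constraint space `U`:
`I(X_A : X_C) = (dim π_A(U) + dim π_C(U) - dim U) · log 2` (natural logarithms). -/
theorem uniform_on_code_mutual_information
    (U : Submodule (ZMod 2) ((A → ZMod 2) × (C → ZMod 2)))
    (p : ((A → ZMod 2) × (C → ZMod 2)) → ℝ)
    (hp : ∀ x, p x =
      Set.indicator (perpSet U) (fun _ => ((Nat.card (perpSet U) : ℝ))⁻¹) x) :
    mi p Prod.fst Prod.snd =
      ((Module.finrank (ZMod 2)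
          (U.map (LinearMap.fst (ZMod 2) (A → ZMod 2) (C → ZMod 2))) : ℝ)
        + (Module.finrank (ZMod 2)
            (U.map (LinearMap.snd (ZMod 2) (A → ZMod 2) (C → ZMod 2))) : ℝ)
        - (Module.finrank (ZMod 2) U : ℝ)) * Real.log 2 := by
  have hrank := congrArg ((↑) : ℕ → ℝ) (finrank_map_fst_add_finrank_map_snd_dualPerp U)
  rw [← coe_dualPerp_prodDotProductEquiv] at hp
  set W := dualPerp (prodDotProductEquiv (ZMod 2)) U
  have hA : entH p Prod.fst = _ :=
    entH_linearMap_eq_finrank_map_mul_log W hp (LinearMap.fst _ _ _)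
  have hC : entH p Prod.snd = _ :=
    entH_linearMap_eq_finrank_map_mul_log W hp (LinearMap.snd _ _ _)
  have hAC : entH p (fun x => (x.1, x.2)) = _ :=
    entH_linearMap_eq_finrank_map_mul_log W hp LinearMap.id
  rw [mi, hA, hC, hAC, Submodule.map_id, Nat.card_zmod]
  push_cast at hrank ⊢
  linear_combination (Real.log 2) * hrank

end
end

section
/- Let A, B, C be finite index sets, let W be an F2-linear subspace of (ZMod 2)^A × (ZMod 2)^B × (ZMod 2)^C, and let X = (X_A, X_B, X_C) be uniformly distributed on W. Define V := π_{AC}(W ∩ ker π_B), the projection onto the A and C coordinates of the subspace of elements of W whose B-coordinates vanish. Then the conditional mutual information satisfies I(X_A : X_C | X_B) = (dim π_A(V) + dim π_C(V) - dim V) · log 2, where π_A, π_C denote coordinate projections of V onto (ZMod 2)^A and (ZMod 2)^C, dim denotes F2-dimension, and entropies use natural logarithms. -/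
/-!
STATEMENT 2: If `X = (X_A, X_B, X_C)` is uniformly distributed on an `F₂`-linear code
`W ≤ (ZMod 2)^A × (ZMod 2)^B × (ZMod 2)^C`, and `V := π_{AC}(W ∩ ker π_B)`, then
`I(X_A : X_C | X_B) = (dim π_A(V) + dim π_C(V) - dim V) · log 2`.
-/

noncomputable section

variable {A B C : Type*} [Fintype A] [DecidableEq A] [Fintype B] [DecidableEq B]
  [Fintype C] [DecidableEq C]

/-- The coordinate projection onto the `B`-part. -/
def projB : ((A → ZMod 2) × (B → ZMod 2) × (C → ZMod 2)) →ₗ[ZMod 2] (B → ZMod 2) :=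
  (LinearMap.fst (ZMod 2) (B → ZMod 2) (C → ZMod 2)).comp
    (LinearMap.snd (ZMod 2) (A → ZMod 2) ((B → ZMod 2) × (C → ZMod 2)))

/-- The coordinate projection onto the `A`- and `C`-parts. -/
def projAC :
    ((A → ZMod 2) × (B → ZMod 2) × (C → ZMod 2)) →ₗ[ZMod 2]
      ((A → ZMod 2) × (C → ZMod 2)) :=
  LinearMap.prod
    (LinearMap.fst (ZMod 2) (A → ZMod 2) ((B → ZMod 2) × (C → ZMod 2)))
    ((LinearMap.snd (ZMod 2) (B → ZMod 2) (C → ZMod 2)).comp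
      (LinearMap.snd (ZMod 2) (A → ZMod 2) ((B → ZMod 2) × (C → ZMod 2))))


/-!
Under the uniform distribution on `W`, every fibre of a linear map `f` restricted to `W` is a
coset of `W ⊓ ker f`, so `f X` is uniform on `f(W)` and `H(f X) = dim f(W) · log 2`. The CMI thus
becomes a signed sum of four ranks, and the rank identity
`dim (f × g)(W) = dim g(W) + dim f(W ⊓ ker g)` writes each of them as `dim π_B(W)` plus a rank
computed inside `W ⊓ ker π_B`; the `dim π_B(W)` terms cancel.
-/

open Module LinearMap

namespace Submodule

section Rank

variable {K M N P : Type*} [Field K] [AddCommGroup M] [Module K M] [FiniteDimensional K M]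
  [AddCommGroup N] [Module K N] [AddCommGroup P] [Module K P]

theorem finrank_map_add_finrank_inf_ker_s2 (W : Submodule K M) (f : M →ₗ[K] N) :
    finrank K (W.map f) + finrank K ↥(W ⊓ ker f) = finrank K W := by
  have h := (f.domRestrict W).finrank_range_add_finrank_ker
  rwa [range_domRestrict, ker_domRestrict, ← top_inf_eq (comap _ _), ← comap_subtype_self W,
    ← comap_inf, (comapSubtypeEquivOfLe inf_le_left).finrank_eq] at h

theorem finrank_map_prod (W : Submodule K M) (f : M →ₗ[K] N) (g : M →ₗ[K] P) :
    finrank K (W.map (f.prod g)) = finrank K (W.map g) + finrank K ((W ⊓ ker g).map f) := by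
  have hfg := W.finrank_map_add_finrank_inf_ker_s2 (f.prod g)
  have hg := W.finrank_map_add_finrank_inf_ker_s2 g
  have hf := (W ⊓ ker g).finrank_map_add_finrank_inf_ker_s2 f
  rw [ker_prod, inf_comm (ker f), ← inf_assoc] at hfg
  omega

end Rank

theorem natCard_fiber_eq_natCard_inf_ker {R M N : Type*} [Ring R] [AddCommGroup M] [Module R M]
    [AddCommGroup N] [Module R N] (W : Submodule R M) (f : M →ₗ[R] N) {w : M} (hw : w ∈ W) :
    Nat.card {x // x ∈ W ∧ f x = f w} = Nat.card ↥(W ⊓ ker f) :=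
  Nat.card_congr <| (Equiv.subRight w).subtypeEquiv fun x => by
    simp [mem_inf, sub_mem_iff_left W hw, sub_eq_zero]

theorem natCard_map_mul_natCard_inf_ker {K M N : Type*} [Field K] [Finite K] [AddCommGroup M]
    [Module K M] [Finite M] [AddCommGroup N] [Module K N] (W : Submodule K M) (f : M →ₗ[K] N) :
    Nat.card (W.map f) * Nat.card ↥(W ⊓ ker f) = Nat.card W := by
  rw [natCard_eq_pow_finrank (K := K) (V := W.map f),
    natCard_eq_pow_finrank (K := K) (V := ↥(W ⊓ ker f)),
    natCard_eq_pow_finrank (K := K) (V := W), ← pow_add, finrank_map_add_finrank_inf_ker_s2]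

end Submodule

theorem entH_eq_log_natCard_of_distOf_eq_indicator {Ω S : Type*} [Fintype Ω] [Fintype S]
    (p : Ω → ℝ) (X : Ω → S) (T : Set S)
    (hX : ∀ s, distOf p X s = T.indicator (fun _ => (Nat.card T : ℝ)⁻¹) s) :
    entH p X = Real.log (Nat.card T) := by
  classical
  have hnegMulLog : ∀ s, Real.negMulLog (distOf p X s)
      = T.indicator (fun _ => (Nat.card T : ℝ)⁻¹ * Real.log (Nat.card T)) s := by
    intro s
    by_cases hs : s ∈ T <;> simp [hX, hs, Real.negMulLog, Real.log_inv]
  simp only [entH, hnegMulLog, Set.indicator_apply, Finset.sum_ite, Finset.sum_const_zero,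
    add_zero, Finset.sum_const, nsmul_eq_mul]
  rw [← Fintype.card_subtype, ← Nat.card_eq_fintype_card]
  obtain hT | hT := eq_or_ne (Nat.card T : ℝ) 0
  · rw [hT, zero_mul, Real.log_zero]
  · exact mul_inv_cancel_left₀ hT _

section Uniform

variable {K M N : Type*} [Field K] [Finite K] [AddCommGroup M] [Module K M] [Fintype M]
  [AddCommGroup N] [Module K N]

theorem distOf_map_of_uniform (W : Submodule K M) (f : M →ₗ[K] N) (p : M → ℝ)
    (hp : ∀ x, p x = (W : Set M).indicator (fun _ => (Nat.card W : ℝ)⁻¹) x) (s : N) :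
    distOf p f s = (W.map f : Set N).indicator (fun _ => (Nat.card (W.map f) : ℝ)⁻¹) s := by
  classical
  have hterm : ∀ x, {x | f x = s}.indicator p x
      = if x ∈ W ∧ f x = s then (Nat.card W : ℝ)⁻¹ else 0 := by
    intro x
    by_cases hx : x ∈ W <;> by_cases hfx : f x = s <;> simp [hp, hx, hfx]
  simp only [distOf, pr, hterm, Finset.sum_ite, Finset.sum_const_zero, add_zero,
    Finset.sum_const, nsmul_eq_mul]
  rw [← Fintype.card_subtype, ← Nat.card_eq_fintype_card]
  by_cases hs : s ∈ W.map f
  · obtain ⟨w, hw, rfl⟩ := hs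
    have hker : (Nat.card ↥(W ⊓ ker f) : ℝ) ≠ 0 := Nat.cast_ne_zero.2 Nat.card_pos.ne'
    rw [W.natCard_fiber_eq_natCard_inf_ker f hw,
      Set.indicator_of_mem (Submodule.mem_map_of_mem hw), ← W.natCard_map_mul_natCard_inf_ker f,
      Nat.cast_mul]
    field_simp
  · have : IsEmpty {x // x ∈ W ∧ f x = s} := ⟨fun ⟨x, hx, hfx⟩ => hs ⟨x, hx, hfx⟩⟩
    rw [Nat.card_of_isEmpty, Set.indicator_of_notMem hs, Nat.cast_zero, zero_mul]

theorem entH_map_of_uniform [Fintype N] (W : Submodule K M) (f : M →ₗ[K] N) (p : M → ℝ)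
    (hp : ∀ x, p x = (W : Set M).indicator (fun _ => (Nat.card W : ℝ)⁻¹) x) :
    entH p f = finrank K (W.map f) * Real.log (Nat.card K) := by
  calc entH p f = Real.log (Nat.card (W.map f)) :=
        entH_eq_log_natCard_of_distOf_eq_indicator p f _ (distOf_map_of_uniform W f p hp)
    _ = finrank K (W.map f) * Real.log (Nat.card K) := by
      rw [natCard_eq_pow_finrank (K := K) (V := W.map f), Nat.cast_pow, Real.log_pow]

end Uniform

def projA : ((A → ZMod 2) × (B → ZMod 2) × (C → ZMod 2)) →ₗ[ZMod 2] (A → ZMod 2) :=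
  LinearMap.fst (ZMod 2) (A → ZMod 2) ((B → ZMod 2) × (C → ZMod 2))

def projC : ((A → ZMod 2) × (B → ZMod 2) × (C → ZMod 2)) →ₗ[ZMod 2] (C → ZMod 2) :=
  (LinearMap.snd (ZMod 2) (B → ZMod 2) (C → ZMod 2)).comp
    (LinearMap.snd (ZMod 2) (A → ZMod 2) ((B → ZMod 2) × (C → ZMod 2)))

/-- The CMI of the uniform distribution on a linear code `W` is given by the rank formula
applied to `V = π_{AC}(W ∩ ker π_B)`:
`I(X_A : X_C | X_B) = (dim π_A(V) + dim π_C(V) - dim V) · log 2`. -/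
theorem uniform_on_code_cmi
    (W : Submodule (ZMod 2) ((A → ZMod 2) × (B → ZMod 2) × (C → ZMod 2)))
    (p : ((A → ZMod 2) × (B → ZMod 2) × (C → ZMod 2)) → ℝ)
    (hp : ∀ x, p x =
      Set.indicator (W : Set ((A → ZMod 2) × (B → ZMod 2) × (C → ZMod 2)))
        (fun _ => ((Nat.card W : ℝ))⁻¹) x) :
    cmi p (fun x => x.1) (fun x => x.2.2) (fun x => x.2.1) =
      ((Module.finrank (ZMod 2)
          (((W ⊓ LinearMap.ker (projB (A := A) (B := B) (C := C))).map projAC).map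
            (LinearMap.fst (ZMod 2) (A → ZMod 2) (C → ZMod 2))) : ℝ)
        + (Module.finrank (ZMod 2)
            (((W ⊓ LinearMap.ker (projB (A := A) (B := B) (C := C))).map projAC).map
              (LinearMap.snd (ZMod 2) (A → ZMod 2) (C → ZMod 2))) : ℝ)
        - (Module.finrank (ZMod 2)
            ((W ⊓ LinearMap.ker (projB (A := A) (B := B) (C := C))).map projAC) : ℝ))
        * Real.log 2 := by
  have hAB := W.finrank_map_prod projA projB
  have hCB := W.finrank_map_prod projC projB
  have hACB := W.finrank_map_prod projA (projC.prod projB)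
  have hAC := (W ⊓ ker projB).finrank_map_prod projA projC
  rw [ker_prod, inf_comm (ker projC), ← inf_assoc, hCB] at hACB
  have hprojAC : projAC (A := A) (B := B) (C := C) = projA.prod projC := rfl
  rw [hprojAC, ← Submodule.map_comp, ← Submodule.map_comp, fst_prod, snd_prod, hAC]
  change entH p (projA.prod projB) + entH p (projC.prod projB) - entH p projB
      - entH p (projA.prod (projC.prod projB)) = _
  simp only [entH_map_of_uniform W _ p hp, hAB, hCB, hACB, Nat.card_zmod]
  push_cast
  ring

end
end
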